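/- Let p, q be positive integers, Σ and Σ̂ real p×p matrices, H a real q×p matrix, and R, R̂ real q×q matrices such that H Σ Hᵀ + R and H Σ̂ Hᵀ + R̂ are invertible. Set K = Σ Hᵀ (H Σ Hᵀ + R)⁻¹ and K̂ = Σ̂ Hᵀ (H Σ̂ Hᵀ + R̂)⁻¹. Then ‖K̂ − K‖ ≤ ( ‖I − K H‖ · ‖Σ̂ − Σ‖ · ‖H‖ + ‖K‖ · ‖R − R̂‖ ) · ‖(H Σ̂ Hᵀ + R̂)⁻¹‖. -/

import Mathlib

open Matrix
open scoped Matrix.Norms.L2Operator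

/-!
With `A = H Σ̂ Hᵀ + R̂`, `B = H Σ Hᵀ + R` and `K = Σ Hᵀ B⁻¹`, the relation `K B = Σ Hᵀ` gives the
exact identity `Σ̂ Hᵀ - K A = (I - K H)(Σ̂ - Σ) Hᵀ + K (R - R̂)`. Multiplying on the right by `A⁻¹`
expresses `K̂ - K` as this matrix times `A⁻¹`, and the bound follows from submultiplicativity
of the spectral norm together with `‖Hᵀ‖ = ‖H‖`.
-/

noncomputable def kalmanGain {m n α : Type*} [Fintype m] [Fintype n] [DecidableEq n]
    [CommRing α] (S : Matrix m m α) (H : Matrix n m α) (R : Matrix n n α) : Matrix m n α :=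
  S * Hᵀ * (H * S * Hᵀ + R)⁻¹

section Algebra

variable {m n α : Type*} [Fintype m] [Fintype n] [DecidableEq n] [CommRing α]
  {S Shat : Matrix m m α} {H : Matrix n m α} {R Rhat : Matrix n n α}

theorem kalmanGain_mul (hB : IsUnit (H * S * Hᵀ + R).det) :
    kalmanGain S H R * (H * S * Hᵀ + R) = S * Hᵀ := by
  rw [kalmanGain, Matrix.mul_assoc, nonsing_inv_mul _ hB, Matrix.mul_one]

theorem mul_transpose_sub_kalmanGain_mul [DecidableEq m] (hB : IsUnit (H * S * Hᵀ + R).det) :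
    Shat * Hᵀ - kalmanGain S H R * (H * Shat * Hᵀ + Rhat) =
      (1 - kalmanGain S H R * H) * (Shat - S) * Hᵀ + kalmanGain S H R * (R - Rhat) := by
  have hK := kalmanGain_mul hB
  set K := kalmanGain S H R
  calc Shat * Hᵀ - K * (H * Shat * Hᵀ + Rhat)
      = (1 - K * H) * (Shat - S) * Hᵀ + K * (R - Rhat) - (K * (H * S * Hᵀ + R) - S * Hᵀ) := by
        simp only [Matrix.sub_mul, Matrix.mul_sub, Matrix.mul_add, Matrix.one_mul,
          Matrix.mul_assoc]
        abel
    _ = (1 - K * H) * (Shat - S) * Hᵀ + K * (R - Rhat) := by rw [hK, sub_self, sub_zero]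

theorem kalmanGain_sub_kalmanGain [DecidableEq m] (hB : IsUnit (H * S * Hᵀ + R).det)
    (hA : IsUnit (H * Shat * Hᵀ + Rhat).det) :
    kalmanGain Shat H Rhat - kalmanGain S H R =
      ((1 - kalmanGain S H R * H) * (Shat - S) * Hᵀ + kalmanGain S H R * (R - Rhat)) *
        (H * Shat * Hᵀ + Rhat)⁻¹ := by
  rw [← mul_transpose_sub_kalmanGain_mul hB, Matrix.sub_mul, Matrix.mul_assoc (kalmanGain S H R),
    mul_nonsing_inv _ hA, Matrix.mul_one, kalmanGain]

end Algebra

section Norm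

variable {l m n : Type*} [Fintype l] [Fintype m] [Fintype n] [DecidableEq l] [DecidableEq m]
  [DecidableEq n]

theorem l2_opNorm_transpose (A : Matrix m n ℝ) : ‖Aᵀ‖ = ‖A‖ := by
  simpa only [conjTranspose_eq_transpose_of_trivial] using l2_opNorm_conjTranspose A

theorem l2_opNorm_mul_transpose_add_mul_mul_le (X D : Matrix l l ℝ) (H : Matrix m l ℝ)
    (K : Matrix l m ℝ) (E M : Matrix m m ℝ) :
    ‖(X * D * Hᵀ + K * E) * M‖ ≤ (‖X‖ * ‖D‖ * ‖H‖ + ‖K‖ * ‖E‖) * ‖M‖ := by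
  have hXDH : ‖X * D * Hᵀ‖ ≤ ‖X‖ * ‖D‖ * ‖H‖ :=
    calc ‖X * D * Hᵀ‖ ≤ ‖X * D‖ * ‖Hᵀ‖ := l2_opNorm_mul _ _
      _ ≤ ‖X‖ * ‖D‖ * ‖H‖ := by
        rw [l2_opNorm_transpose]
        gcongr
        exact l2_opNorm_mul _ _
  calc ‖(X * D * Hᵀ + K * E) * M‖ ≤ ‖X * D * Hᵀ + K * E‖ * ‖M‖ := l2_opNorm_mul _ _
    _ ≤ (‖X * D * Hᵀ‖ + ‖K * E‖) * ‖M‖ := by gcongr; exact norm_add_le _ _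
    _ ≤ (‖X‖ * ‖D‖ * ‖H‖ + ‖K‖ * ‖E‖) * ‖M‖ := by
      gcongr
      exact l2_opNorm_mul _ _

end Norm

theorem kalman_gain_error_bound_estimated_R_general (p q : ℕ)
    (S Shat : Matrix (Fin p) (Fin p) ℝ) (H : Matrix (Fin q) (Fin p) ℝ)
    (R Rhat : Matrix (Fin q) (Fin q) ℝ)
    (h1 : IsUnit (H * S * Hᵀ + R).det) (h2 : IsUnit (H * Shat * Hᵀ + Rhat).det) :
    ‖Shat * Hᵀ * (H * Shat * Hᵀ + Rhat)⁻¹ - S * Hᵀ * (H * S * Hᵀ + R)⁻¹‖ ≤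
      (‖(1 : Matrix (Fin p) (Fin p) ℝ) - S * Hᵀ * (H * S * Hᵀ + R)⁻¹ * H‖ * ‖Shat - S‖ * ‖H‖ +
          ‖S * Hᵀ * (H * S * Hᵀ + R)⁻¹‖ * ‖R - Rhat‖) *
        ‖(H * Shat * Hᵀ + Rhat)⁻¹‖ := by
  have hgain := kalmanGain_sub_kalmanGain (m := Fin p) (n := Fin q) h1 h2
  unfold kalmanGain at hgain
  rw [hgain]
  exact l2_opNorm_mul_transpose_add_mul_mul_le _ _ _ _ _ _

/-- **first bound of Corollary 1.** For Kalman gains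
`K = Σ Hᵀ (H Σ Hᵀ + R)⁻¹` and `K̂ = Σ̂ Hᵀ (H Σ̂ Hᵀ + R̂)⁻¹` (with both
`H Σ Hᵀ + R` and `H Σ̂ Hᵀ + R̂` invertible),
`‖K̂ − K‖ ≤ (‖I − K H‖ ‖Σ̂ − Σ‖ ‖H‖ + ‖K‖ ‖R − R̂‖) ‖(H Σ̂ Hᵀ + R̂)⁻¹‖`
in the spectral norm. -/
theorem kalman_gain_error_bound_estimated_R (p q : ℕ) (hp : 0 < p) (hq : 0 < q)
    (S Shat : Matrix (Fin p) (Fin p) ℝ) (H : Matrix (Fin q) (Fin p) ℝ)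
    (R Rhat : Matrix (Fin q) (Fin q) ℝ)
    (h1 : IsUnit (H * S * Hᵀ + R).det) (h2 : IsUnit (H * Shat * Hᵀ + Rhat).det) :
    ‖Shat * Hᵀ * (H * Shat * Hᵀ + Rhat)⁻¹ - S * Hᵀ * (H * S * Hᵀ + R)⁻¹‖ ≤
      (‖(1 : Matrix (Fin p) (Fin p) ℝ) - S * Hᵀ * (H * S * Hᵀ + R)⁻¹ * H‖ * ‖Shat - S‖ * ‖H‖ +
          ‖S * Hᵀ * (H * S * Hᵀ + R)⁻¹‖ * ‖R - Rhat‖) *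
        ‖(H * Shat * Hᵀ + Rhat)⁻¹‖ :=
  kalman_gain_error_bound_estimated_R_general p q S Shat H R Rhat h1 h2
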